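/- arXiv:1309.4531 — 5 statements merged into one kernel-verified Lean document; each statement's English description precedes it below -/
import Mathlib

section
/- Let n ≥ 1, φ : Fin n → ℝ, y : Fin n → ℝ with y ⪰ 0, and suppose J(y) = Σᵢ yᵢ·u(φᵢ)u(φᵢ)ᵀ is invertible. Then trace(J(y)⁻¹) = 4·(𝟙ᵀy) / ((𝟙ᵀy)² − (cᵀy)² − (sᵀy)²), where cᵢ = cos(2φᵢ) and sᵢ = sin(2φᵢ). -/
/-!
Writing `A, B, C` for the entries `∑ yᵢ cos² φᵢ`, `∑ yᵢ cos φᵢ sin φᵢ`, `∑ yᵢ sin² φᵢ` of `J(y)`,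
the double-angle formulas give `𝟙ᵀy = A + C`, `cᵀy = A - C` and `sᵀy = 2B`, so the denominator is
`(A + C)² - (A - C)² - 4B² = 4 det J(y)`, while `trace J(y)⁻¹ = trace J(y) / det J(y)` for any
`2 × 2` matrix.
-/

open Matrix Real

/-- Valid also for singular `M`, where `M⁻¹ = 0` and `x / 0 = 0`. -/
theorem Matrix.trace_inv_fin_two {K : Type*} [Field K] (M : Matrix (Fin 2) (Fin 2) K) :
    M⁻¹.trace = M.trace / M.det := by
  rw [inv_def, trace_smul, adjugate_fin_two, trace_fin_two, trace_fin_two, Ring.inverse_eq_inv]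
  simp only [of_apply, cons_val', cons_val_zero, cons_val_one, empty_val', cons_val_fin_one,
    smul_eq_mul]
  ring

section EFIM

variable {ι : Type*} [Fintype ι] (φ y : ι → ℝ)

/-- The equivalent Fisher information matrix `J(y)`. -/
noncomputable def efim : Matrix (Fin 2) (Fin 2) ℝ :=
  ∑ i, y i • vecMulVec ![cos (φ i), sin (φ i)] ![cos (φ i), sin (φ i)]

theorem efim_apply (a b : Fin 2) :
    efim φ y a b = ∑ i, y i * (![cos (φ i), sin (φ i)] a * ![cos (φ i), sin (φ i)] b) := by
  simp only [efim, Matrix.sum_apply, Matrix.smul_apply, vecMulVec_apply, smul_eq_mul]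

theorem trace_efim : (efim φ y).trace = ∑ i, y i := by
  rw [trace_fin_two, efim_apply, efim_apply, ← Finset.sum_add_distrib]
  refine Finset.sum_congr rfl fun i _ => ?_
  simp only [cons_val_zero, cons_val_one]
  linear_combination y i * cos_sq_add_sin_sq (φ i)

theorem four_mul_det_efim :
    4 * (efim φ y).det = (∑ i, y i) ^ 2 - (∑ i, cos (2 * φ i) * y i) ^ 2
      - (∑ i, sin (2 * φ i) * y i) ^ 2 := by
  have h_sum : ∑ i, y i = efim φ y 0 0 + efim φ y 1 1 := by
    rw [← trace_fin_two, trace_efim]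
  have h_cos : ∑ i, cos (2 * φ i) * y i = efim φ y 0 0 - efim φ y 1 1 := by
    rw [efim_apply, efim_apply, ← Finset.sum_sub_distrib]
    refine Finset.sum_congr rfl fun i _ => ?_
    simp only [cons_val_zero, cons_val_one, cos_two_mul]
    linear_combination y i * sin_sq_add_cos_sq (φ i)
  have h_sin : ∑ i, sin (2 * φ i) * y i = 2 * efim φ y 0 1 := by
    rw [efim_apply, Finset.mul_sum]
    refine Finset.sum_congr rfl fun i _ => ?_
    simp only [cons_val_zero, cons_val_one, sin_two_mul]
    ring
  have h_symm : efim φ y 1 0 = efim φ y 0 1 := by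
    simp only [efim_apply, cons_val_zero, cons_val_one, mul_comm (sin _)]
  rw [det_fin_two, h_sum, h_cos, h_sin, h_symm]
  ring

end EFIM

theorem trace_inv_EFIM_general (n : ℕ) (φ y : Fin n → ℝ) :
    ((∑ i, y i • Matrix.vecMulVec ![Real.cos (φ i), Real.sin (φ i)]
        ![Real.cos (φ i), Real.sin (φ i)])⁻¹).trace
      = 4 * (∑ i, y i) / ((∑ i, y i) ^ 2 - (∑ i, Real.cos (2 * φ i) * y i) ^ 2
          - (∑ i, Real.sin (2 * φ i) * y i) ^ 2) := by
  change (efim φ y)⁻¹.trace = _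
  rw [trace_inv_fin_two, trace_efim, ← four_mul_det_efim, mul_div_mul_left _ _ four_ne_zero]

theorem trace_inv_EFIM (n : ℕ) (hn : 1 ≤ n) (φ y : Fin n → ℝ) (hy : ∀ i, 0 ≤ y i)
    (hJ : IsUnit (∑ i, y i • Matrix.vecMulVec ![Real.cos (φ i), Real.sin (φ i)]
        ![Real.cos (φ i), Real.sin (φ i)]).det) :
    ((∑ i, y i • Matrix.vecMulVec ![Real.cos (φ i), Real.sin (φ i)]
        ![Real.cos (φ i), Real.sin (φ i)])⁻¹).trace
      = 4 * (∑ i, y i) / ((∑ i, y i) ^ 2 - (∑ i, Real.cos (2 * φ i) * y i) ^ 2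
          - (∑ i, Real.sin (2 * φ i) * y i) ^ 2) :=
  trace_inv_EFIM_general n φ y
end

section
/- Let y ⪰ 0 in ℝⁿ and angles φⱼ with uncertainty intervals [φ̂ⱼ − φ̃ⱼ, φ̂ⱼ + φ̃ⱼ]. Define S(y) = max over admissible φ of ‖Σⱼ yⱼ·u(2φⱼ)‖. Then S(y) = max over ϑ ∈ [0, 2π) of Σⱼ yⱼ · max_{|ε|≤2φ̃ⱼ} cos(2φ̂ⱼ + ε − ϑ). -/
/-!
Since `‖v‖ = max_ϑ u(ϑ)ᵀv` and `u(ϑ)ᵀ Σⱼ yⱼ u(2φⱼ) = Σⱼ yⱼ cos(2φⱼ - ϑ)`, the worst-case norm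
is a double maximum over `φ` and `ϑ`. Exchanging the two maxima, the inner maximum over `φ`
splits into independent maxima over the coordinates because `y ⪰ 0`, and each of them is
attained because the uncertainty intervals are compact.
-/

open Real Set

lemma cos_mul_add_sin_mul_le_sqrt (ϑ C S : ℝ) : cos ϑ * C + sin ϑ * S ≤ √(C ^ 2 + S ^ 2) :=
  le_sqrt_of_sq_le (by nlinarith [sin_sq_add_cos_sq ϑ, sq_nonneg (cos ϑ * S - sin ϑ * C)])

lemma exists_mem_Ico_cos_mul_add_sin_mul_eq_sqrt (C S : ℝ) :
    ∃ ϑ ∈ Ico 0 (2 * π), cos ϑ * C + sin ϑ * S = √(C ^ 2 + S ^ 2) := by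
  set z : ℂ := ⟨C, S⟩
  have hnorm : ‖z‖ = √(C ^ 2 + S ^ 2) := by
    rw [Complex.norm_def, Complex.normSq_mk]
    ring_nf
  refine ⟨toIcoMod two_pi_pos 0 z.arg, by simpa using toIcoMod_mem_Ico two_pi_pos 0 z.arg, ?_⟩
  rw [← self_sub_toIcoDiv_zsmul, zsmul_eq_mul, cos_sub_int_mul_two_pi, sin_sub_int_mul_two_pi,
    ← hnorm]
  calc cos z.arg * C + sin z.arg * S
      = cos z.arg * (‖z‖ * cos z.arg) + sin z.arg * (‖z‖ * sin z.arg) := by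
        rw [Complex.norm_mul_cos_arg, Complex.norm_mul_sin_arg]
    _ = ‖z‖ := by linear_combination ‖z‖ * sin_sq_add_cos_sq z.arg

lemma cos_mul_sum_add_sin_mul_sum {ι : Type*} (s : Finset ι) (y φ : ι → ℝ) (ϑ : ℝ) :
    cos ϑ * ∑ j ∈ s, y j * cos (φ j) + sin ϑ * ∑ j ∈ s, y j * sin (φ j)
      = ∑ j ∈ s, y j * cos (φ j - ϑ) := by
  rw [Finset.mul_sum, Finset.mul_sum, ← Finset.sum_add_distrib]
  refine Finset.sum_congr rfl fun j _ => ?_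
  rw [cos_sub]
  ring

noncomputable def maxCos (a t ϑ : ℝ) : ℝ := sSup ((fun ε => cos (a + ε - ϑ)) '' Icc (-t) t)

section

variable {ι : Type*} [Fintype ι] (y hphi tphi : ι → ℝ)

lemma exists_sqrt_le_sum_mul_maxCos (hy : ∀ j, 0 ≤ y j) {φ : ι → ℝ}
    (hφ : ∀ j, |φ j - hphi j| ≤ tphi j) :
    ∃ ϑ ∈ Ico 0 (2 * π),
      √((∑ j, y j * cos (2 * φ j)) ^ 2 + (∑ j, y j * sin (2 * φ j)) ^ 2) ≤
        ∑ j, y j * maxCos (2 * hphi j) (2 * tphi j) ϑ := by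
  obtain ⟨ϑ, hϑ, hproj⟩ := exists_mem_Ico_cos_mul_add_sin_mul_eq_sqrt
    (∑ j, y j * cos (2 * φ j)) (∑ j, y j * sin (2 * φ j))
  refine ⟨ϑ, hϑ, ?_⟩
  rw [← hproj, cos_mul_sum_add_sin_mul_sum]
  gcongr with j
  · exact hy j
  have hε : 2 * φ j - 2 * hphi j ∈ Icc (-(2 * tphi j)) (2 * tphi j) := by
    obtain ⟨hlo, hhi⟩ := abs_le.1 (hφ j)
    constructor <;> linarith
  calc cos (2 * φ j - ϑ) = cos (2 * hphi j + (2 * φ j - 2 * hphi j) - ϑ) := by ring_nf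
    _ ≤ _ := le_csSup (isCompact_Icc.image (by fun_prop)).bddAbove
      (mem_image_of_mem (fun ε => cos (2 * hphi j + ε - ϑ)) hε)

lemma exists_sum_mul_maxCos_le_sqrt (ht : ∀ j, 0 ≤ tphi j) (ϑ : ℝ) :
    ∃ φ : ι → ℝ, (∀ j, |φ j - hphi j| ≤ tphi j) ∧
      ∑ j, y j * maxCos (2 * hphi j) (2 * tphi j) ϑ ≤
        √((∑ j, y j * cos (2 * φ j)) ^ 2 + (∑ j, y j * sin (2 * φ j)) ^ 2) := by
  choose ε hε hεmax using fun j =>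
    ((isCompact_Icc (a := -(2 * tphi j)) (b := 2 * tphi j)).image (by fun_prop)).sSup_mem
      ((nonempty_Icc.2 (by linarith [ht j])).image (fun ε => cos (2 * hphi j + ε - ϑ)))
  refine ⟨fun j => hphi j + ε j / 2, fun j => ?_, ?_⟩
  · obtain ⟨hlo, hhi⟩ := hε j
    rw [add_sub_cancel_left, abs_le]
    constructor <;> linarith
  calc ∑ j, y j * maxCos (2 * hphi j) (2 * tphi j) ϑ
      = ∑ j, y j * cos (2 * (hphi j + ε j / 2) - ϑ) := by
        refine Finset.sum_congr rfl fun j _ => ?_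
        rw [maxCos, ← hεmax j]
        ring_nf
    _ = _ := (cos_mul_sum_add_sin_mul_sum _ _ _ ϑ).symm
    _ ≤ _ := cos_mul_add_sin_mul_le_sqrt _ _ _

end

theorem worst_norm_eq_sup_proj_general (n : ℕ) (y hphi tphi : Fin n → ℝ)
    (hy : ∀ j, 0 ≤ y j) (ht : ∀ j, 0 ≤ tphi j) :
    sSup {r : ℝ | ∃ φ : Fin n → ℝ, (∀ j, |φ j - hphi j| ≤ tphi j) ∧
        r = Real.sqrt ((∑ j, y j * Real.cos (2 * φ j)) ^ 2
              + (∑ j, y j * Real.sin (2 * φ j)) ^ 2)}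
      = sSup {r : ℝ | ∃ ϑ ∈ Set.Ico (0 : ℝ) (2 * Real.pi),
          r = ∑ j, y j *
            sSup ((fun ε => Real.cos (2 * hphi j + ε - ϑ)) ''
              Set.Icc (-(2 * tphi j)) (2 * tphi j))} := by
  apply csSup_eq_csSup_of_forall_exists_le
  · rintro _ ⟨φ, hφ, rfl⟩
    obtain ⟨ϑ, hϑ, hle⟩ := exists_sqrt_le_sum_mul_maxCos y hphi tphi hy hφ
    exact ⟨_, ⟨ϑ, hϑ, rfl⟩, hle⟩
  · rintro _ ⟨ϑ, -, rfl⟩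
    obtain ⟨φ, hφ, hle⟩ := exists_sum_mul_maxCos_le_sqrt y hphi tphi ht ϑ
    exact ⟨_, ⟨φ, hφ, rfl⟩, hle⟩

theorem worst_norm_eq_sup_proj (n : ℕ) (hn : 1 ≤ n) (y hphi tphi : Fin n → ℝ)
    (hy : ∀ j, 0 ≤ y j) (ht : ∀ j, 0 ≤ tphi j) :
    sSup {r : ℝ | ∃ φ : Fin n → ℝ, (∀ j, |φ j - hphi j| ≤ tphi j) ∧
        r = Real.sqrt ((∑ j, y j * Real.cos (2 * φ j)) ^ 2
              + (∑ j, y j * Real.sin (2 * φ j)) ^ 2)}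
      = sSup {r : ℝ | ∃ ϑ ∈ Set.Ico (0 : ℝ) (2 * Real.pi),
          r = ∑ j, y j *
            sSup ((fun ε => Real.cos (2 * hphi j + ε - ϑ)) ''
              Set.Icc (-(2 * tphi j)) (2 * tphi j))} :=
  worst_norm_eq_sup_proj_general n y hphi tphi hy ht
end

section
/- (Finite projection lower bound) With S(y) as above and ϑₘ = (2m+1)π/M for m = 0,…,M−1, define h_m ∈ ℝⁿ by (h_m)ⱼ = max_{|ε|≤2φ̃ⱼ} cos(2φ̂ⱼ − ϑₘ + ε). Then for all y ⪰ 0, max_m h_mᵀy ≤ S(y). -/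
/-!
Write `z = ∑ⱼ yⱼ e^{2iφⱼ}`, so that the right-hand side is the supremum of `‖z‖` over admissible `φ`.
For each `j` pick the maximiser `εⱼ` of `cos (2φ̂ⱼ - ϑₘ + ε)` and set `φⱼ = φ̂ⱼ + εⱼ / 2`. Then
`h_mᵀ y = Re (e^{-iϑₘ} z) ≤ ‖z‖`.
-/

open Complex Finset

section

variable {ι : Type*} [Fintype ι]

lemma norm_sum_mul_exp_eq_sqrt (y ψ : ι → ℝ) :
    ‖∑ j, (y j : ℂ) * exp (ψ j * I)‖ =
      √((∑ j, y j * Real.cos (ψ j)) ^ 2 + (∑ j, y j * Real.sin (ψ j)) ^ 2) := by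
  simp only [norm_def, normSq_apply, re_sum, im_sum, re_ofReal_mul, im_ofReal_mul,
    exp_ofReal_mul_I_re, exp_ofReal_mul_I_im, sq]

lemma norm_sum_mul_exp_le (y ψ : ι → ℝ) :
    ‖∑ j, (y j : ℂ) * exp (ψ j * I)‖ ≤ ∑ j, |y j| :=
  (norm_sum_le _ _).trans_eq <| by
    simp only [norm_mul, norm_exp_ofReal_mul_I, mul_one, norm_real, Real.norm_eq_abs]

lemma re_exp_neg_mul_sum_mul_exp (θ : ℝ) (y ψ : ι → ℝ) :
    (exp (↑(-θ) * I) * ∑ j, (y j : ℂ) * exp (ψ j * I)).re = ∑ j, Real.cos (ψ j - θ) * y j := by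
  rw [mul_sum, re_sum]
  refine sum_congr rfl fun j _ => ?_
  rw [mul_left_comm, ← exp_add, ← add_mul, re_ofReal_mul, ← ofReal_add,
    exp_ofReal_mul_I_re, neg_add_eq_sub, mul_comm]

end

lemma exists_mem_Icc_cos_add_eq_sSup (c : ℝ) {t : ℝ} (ht : 0 ≤ t) :
    ∃ ε ∈ Set.Icc (-t) t,
      Real.cos (c + ε) = sSup ((fun ε => Real.cos (c + ε)) '' Set.Icc (-t) t) := by
  obtain ⟨ε, hε, h⟩ := (isCompact_Icc (a := -t) (b := t)).exists_sSup_image_eq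
    (Set.nonempty_Icc.2 (by linarith))
    (Real.continuous_cos.comp (continuous_const.add continuous_id)).continuousOn
  exact ⟨ε, hε, h.symm⟩

theorem finite_projection_lower_bound_general (n M : ℕ)
    (y hphi tphi : Fin n → ℝ) (ht : ∀ j, 0 ≤ tphi j) :
    ∀ m : Fin M,
      (∑ j, (sSup ((fun ε => Real.cos (2 * hphi j - (2 * (m : ℝ) + 1) * Real.pi / M + ε)) ''
          Set.Icc (-(2 * tphi j)) (2 * tphi j))) * y j)
        ≤ sSup {r : ℝ | ∃ φ : Fin n → ℝ, (∀ j, |φ j - hphi j| ≤ tphi j) ∧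
            r = Real.sqrt ((∑ j, y j * Real.cos (2 * φ j)) ^ 2
                  + (∑ j, y j * Real.sin (2 * φ j)) ^ 2)} := by
  intro m
  set θ : ℝ := (2 * (m : ℝ) + 1) * Real.pi / M
  choose ε hε hε_max using fun j =>
    exists_mem_Icc_cos_add_eq_sSup (2 * hphi j - θ) (by linarith [ht j] : 0 ≤ 2 * tphi j)
  set φ : Fin n → ℝ := fun j => hphi j + ε j / 2
  have hφ : ∀ j, |φ j - hphi j| ≤ tphi j := fun j => by
    rw [abs_le]; constructor <;> simp only [φ] <;> linarith [(hε j).1, (hε j).2]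
  have h_bdd : BddAbove {r : ℝ | ∃ φ : Fin n → ℝ, (∀ j, |φ j - hphi j| ≤ tphi j) ∧
      r = √((∑ j, y j * Real.cos (2 * φ j)) ^ 2 + (∑ j, y j * Real.sin (2 * φ j)) ^ 2)} := by
    refine ⟨∑ j, |y j|, ?_⟩
    rintro r ⟨ψ, -, rfl⟩
    rw [← norm_sum_mul_exp_eq_sqrt y fun j => 2 * ψ j]
    exact norm_sum_mul_exp_le _ _
  calc ∑ j, sSup ((fun ε => Real.cos (2 * hphi j - θ + ε)) ''
          Set.Icc (-(2 * tphi j)) (2 * tphi j)) * y j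
      = ∑ j, Real.cos (2 * φ j - θ) * y j := by
        refine sum_congr rfl fun j _ => ?_
        rw [← hε_max j, show 2 * hphi j - θ + ε j = 2 * φ j - θ by simp only [φ]; ring]
    _ = (exp (↑(-θ) * I) * ∑ j, (y j : ℂ) * exp (↑(2 * φ j) * I)).re :=
        (re_exp_neg_mul_sum_mul_exp θ y fun j => 2 * φ j).symm
    _ ≤ ‖∑ j, (y j : ℂ) * exp (↑(2 * φ j) * I)‖ :=
        (re_le_norm _).trans_eq (by rw [norm_mul, norm_exp_ofReal_mul_I, one_mul])
    _ ≤ _ := by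
        rw [norm_sum_mul_exp_eq_sqrt y fun j => 2 * φ j]
        exact le_csSup h_bdd ⟨φ, hφ, rfl⟩

theorem finite_projection_lower_bound (n M : ℕ) (hn : 1 ≤ n) (hM : 0 < M)
    (y hphi tphi : Fin n → ℝ) (hy : ∀ j, 0 ≤ y j) (ht : ∀ j, 0 ≤ tphi j) :
    ∀ m : Fin M,
      (∑ j, (sSup ((fun ε => Real.cos (2 * hphi j - (2 * (m : ℝ) + 1) * Real.pi / M + ε)) ''
          Set.Icc (-(2 * tphi j)) (2 * tphi j))) * y j)
        ≤ sSup {r : ℝ | ∃ φ : Fin n → ℝ, (∀ j, |φ j - hphi j| ≤ tphi j) ∧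
            r = Real.sqrt ((∑ j, y j * Real.cos (2 * φ j)) ^ 2
                  + (∑ j, y j * Real.sin (2 * φ j)) ^ 2)} :=
  finite_projection_lower_bound_general n M y hphi tphi ht
end

section
/- (Finite projection upper bound) With the same setup, define g_m = h_m / cos(π/M) for M ≥ 3. Then for all y ⪰ 0, S(y) ≤ max_m g_mᵀy. -/
/-!
Write `(∑ yⱼ cos 2φⱼ, ∑ yⱼ sin 2φⱼ) = S (cos θ, sin θ)`. The grid angles `ϑₘ = (2m+1)π/M` split
the circle into arcs of length `2π/M`, so `θ` lies within `π/M` of some `ϑₘ` modulo `2π`, whence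
`S cos(π/M) ≤ S cos(θ - ϑₘ) = ∑ yⱼ cos(2φⱼ - ϑₘ)`. Since `y ⪰ 0`, each term is at most `yⱼ` times the
supremum of `cos(2φⱼ - ϑₘ)` over the admissible interval for `φⱼ`, i.e. `(hₘ)ⱼ yⱼ`. Dividing by
`cos(π/M) > 0` and passing to the best `m` bounds every `S` uniformly.
-/

open Real

noncomputable def gridAngle (M m : ℕ) : ℝ := (2 * m + 1) * π / M

lemma exists_abs_sub_gridAngle_sub_le {M : ℕ} (hM : 0 < M) (θ : ℝ) :
    ∃ m : Fin M, ∃ k : ℤ, |θ - gridAngle M m - k * (2 * π)| ≤ π / M := by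
  have hMℝ : (0 : ℝ) < M := by exact_mod_cast hM
  -- `θ` lies in the `q`-th arc; `q % M` names its grid angle and `q / M` counts full turns.
  set q := ⌊θ * M / (2 * π)⌋
  have hr : 0 ≤ q % M := Int.emod_nonneg q (by omega)
  have hrM : q % M < M := Int.emod_lt_of_pos q (by omega)
  refine ⟨⟨(q % M).toNat, by omega⟩, q / M, ?_⟩
  have hdiv : (((q % M).toNat : ℕ) : ℝ) + (q / M : ℤ) * M = q := by
    have : (((q % M).toNat : ℤ) : ℝ) + (q / M : ℤ) * (M : ℤ) = q := by
      rw [Int.toNat_of_nonneg hr]; exact_mod_cast by linarith [Int.mul_ediv_add_emod q M]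
    exact_mod_cast this
  have hshift : gridAngle M (q % M).toNat + (q / M : ℤ) * (2 * π) = (2 * q + 1) * π / M := by
    rw [gridAngle, ← hdiv]; field_simp; ring
  have hlo : (q : ℝ) * (2 * π) ≤ θ * M :=
    (le_div_iff₀ (by positivity)).mp (Int.floor_le _)
  have hhi : θ * M < (q + 1) * (2 * π) :=
    (div_lt_iff₀ (by positivity)).mp (Int.lt_floor_add_one _)
  have hsub : θ - (2 * q + 1) * π / M = (θ * M - (2 * q + 1) * π) / M := by field_simp
  rw [sub_sub, Fin.val_mk, hshift, hsub, abs_div, abs_of_pos hMℝ,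
    div_le_div_iff_of_pos_right hMℝ, abs_le]
  constructor <;> linarith

lemma exists_cos_pi_div_le_cos_sub_gridAngle {M : ℕ} (hM : 0 < M) (θ : ℝ) :
    ∃ m : Fin M, cos (π / M) ≤ cos (θ - gridAngle M m) := by
  obtain ⟨m, k, hk⟩ := exists_abs_sub_gridAngle_sub_le hM θ
  refine ⟨m, ?_⟩
  have hπM : π / M ≤ π := div_le_self pi_pos.le (by exact_mod_cast hM)
  calc cos (π / M) ≤ cos |θ - gridAngle M m - k * (2 * π)| :=
        cos_le_cos_of_nonneg_of_le_pi (abs_nonneg _) hπM hk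
    _ = cos (θ - gridAngle M m) := by rw [cos_abs, cos_sub_int_mul_two_pi]

lemma exists_sqrt_mul_cos_pi_div_le {M : ℕ} (hM : 0 < M) (a b : ℝ) :
    ∃ m : Fin M, √(a ^ 2 + b ^ 2) * cos (π / M) ≤
      a * cos (gridAngle M m) + b * sin (gridAngle M m) := by
  set z : ℂ := ⟨a, b⟩
  obtain ⟨m, hm⟩ := exists_cos_pi_div_le_cos_sub_gridAngle hM z.arg
  refine ⟨m, ?_⟩
  have hnorm : ‖z‖ = √(a ^ 2 + b ^ 2) := by
    rw [Complex.norm_def, Complex.normSq_apply]; ring_nf; rfl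
  calc √(a ^ 2 + b ^ 2) * cos (π / M) ≤ ‖z‖ * cos (z.arg - gridAngle M m) := by
        rw [hnorm]; gcongr
    _ = a * cos (gridAngle M m) + b * sin (gridAngle M m) := by
        rw [cos_sub, mul_add, ← mul_assoc, ← mul_assoc, Complex.norm_mul_cos_arg,
          Complex.norm_mul_sin_arg]

lemma cos_pi_div_pos {M : ℕ} (hM : 2 < M) : 0 < cos (π / M) := by
  have hM' : (2 : ℝ) < M := by exact_mod_cast hM
  apply cos_pos_of_mem_Ioo
  constructor
  · linarith [pi_pos, show 0 < π / M by positivity]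
  · rw [div_lt_div_iff₀ (by linarith) two_pos]; nlinarith [pi_pos]

-- `gridAngle M m` is the paper's `ϑₘ` and `projCoeff M c t m` its vector `hₘ`.
noncomputable def projCoeff {ι : Type*} (M : ℕ) (c t : ι → ℝ) (m : ℕ) (j : ι) : ℝ :=
  sSup ((fun ε => cos (2 * c j - gridAngle M m + ε)) '' Set.Icc (-(2 * t j)) (2 * t j))

lemma cos_two_mul_sub_gridAngle_le_projCoeff {ι : Type*} {M : ℕ} {c t : ι → ℝ} {j : ι} {φ : ℝ}
    (hφ : |φ - c j| ≤ t j) (m : ℕ) : cos (2 * φ - gridAngle M m) ≤ projCoeff M c t m j := by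
  have hε : |2 * (φ - c j)| ≤ 2 * t j := by rw [abs_mul, abs_two]; linarith
  calc cos (2 * φ - gridAngle M m) = cos (2 * c j - gridAngle M m + 2 * (φ - c j)) := by ring_nf
    _ ≤ projCoeff M c t m j :=
        le_csSup ⟨1, by rintro _ ⟨e, -, rfl⟩; exact cos_le_one _⟩ ⟨_, abs_le.mp hε, rfl⟩

lemma exists_sqrt_mul_cos_pi_div_le_sum_projCoeff {ι : Type*} [Fintype ι] {M : ℕ} (hM : 0 < M)
    {y c t φ : ι → ℝ} (hy : ∀ j, 0 ≤ y j) (hφ : ∀ j, |φ j - c j| ≤ t j) :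
    ∃ m : Fin M, √((∑ j, y j * cos (2 * φ j)) ^ 2 + (∑ j, y j * sin (2 * φ j)) ^ 2) * cos (π / M)
      ≤ ∑ j, projCoeff M c t m j * y j := by
  obtain ⟨m, hm⟩ := exists_sqrt_mul_cos_pi_div_le hM
    (∑ j, y j * cos (2 * φ j)) (∑ j, y j * sin (2 * φ j))
  refine ⟨m, hm.trans ?_⟩
  rw [Finset.sum_mul, Finset.sum_mul, ← Finset.sum_add_distrib]
  gcongr with j
  rw [mul_assoc, mul_assoc, ← mul_add, ← cos_sub, mul_comm (projCoeff _ _ _ _ _)]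
  exact mul_le_mul_of_nonneg_left (cos_two_mul_sub_gridAngle_le_projCoeff (hφ j) m) (hy j)

theorem finite_projection_upper_bound_general (n M : ℕ) (hM : 3 ≤ M)
    (y hphi tphi : Fin n → ℝ) (hy : ∀ j, 0 ≤ y j) (ht : ∀ j, 0 ≤ tphi j) :
    ∃ m : Fin M,
      sSup {r : ℝ | ∃ φ : Fin n → ℝ, (∀ j, |φ j - hphi j| ≤ tphi j) ∧
          r = Real.sqrt ((∑ j, y j * Real.cos (2 * φ j)) ^ 2
                + (∑ j, y j * Real.sin (2 * φ j)) ^ 2)}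
        ≤ (∑ j, ((sSup ((fun ε => Real.cos (2 * hphi j - (2 * (m : ℝ) + 1) * Real.pi / M + ε)) ''
            Set.Icc (-(2 * tphi j)) (2 * tphi j))) / Real.cos (Real.pi / M)) * y j) := by
  have hcos := cos_pi_div_pos hM
  have : Nonempty (Fin M) := ⟨⟨0, by omega⟩⟩
  obtain ⟨mstar, hmax⟩ := Finite.exists_max fun m : Fin M =>
    ∑ j, (projCoeff M hphi tphi m j / cos (π / M)) * y j
  refine ⟨mstar, csSup_le ⟨_, hphi, fun j => by simpa using ht j, rfl⟩ ?_⟩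
  rintro _ ⟨φ, hφ, rfl⟩
  obtain ⟨m, hm⟩ := exists_sqrt_mul_cos_pi_div_le_sum_projCoeff (by omega : 0 < M) hy hφ
  refine le_trans ?_ (hmax m)
  simp only [div_mul_eq_mul_div, ← Finset.sum_div]
  exact (le_div_iff₀ hcos).mpr hm

theorem finite_projection_upper_bound (n M : ℕ) (hn : 1 ≤ n) (hM : 3 ≤ M)
    (y hphi tphi : Fin n → ℝ) (hy : ∀ j, 0 ≤ y j) (ht : ∀ j, 0 ≤ tphi j) :
    ∃ m : Fin M,
      sSup {r : ℝ | ∃ φ : Fin n → ℝ, (∀ j, |φ j - hphi j| ≤ tphi j) ∧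
          r = Real.sqrt ((∑ j, y j * Real.cos (2 * φ j)) ^ 2
                + (∑ j, y j * Real.sin (2 * φ j)) ^ 2)}
        ≤ (∑ j, ((sSup ((fun ε => Real.cos (2 * hphi j - (2 * (m : ℝ) + 1) * Real.pi / M + ε)) ''
            Set.Icc (-(2 * tphi j)) (2 * tphi j))) / Real.cos (Real.pi / M)) * y j) :=
  finite_projection_upper_bound_general n M hM y hphi tphi hy ht
end

section
/- Let T, G, H, D > 0 satisfy H = cos(π/M)·G, H² ≤ T²·(1 − 1/B), G < T, where B = T²/(T² − S²) ≥ 1 for some 0 ≤ S < T with H ≤ S ≤ G. Then 4T/(T² − G²) ≤ (1 + C_M)·4T/(T² − H²), where C_M = sin²(π/M)·(B − 1)/(1 − sin²(π/M)·B) and M ≥ π√B. -/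
/-!
Writing `s = sin (π / M)` and `c = cos (π / M)`, the factor `1 + C_M` equals `c² / (1 - s² B)`,
so the claim is `(1 - s² B) (T² - H²) ≤ c² (T² - G²) = c² T² - H²`. After cancelling, this is
`s² T² ≤ s² B (T² - H²)`, which is the hypothesis on `H²` multiplied by `B`. The condition
`M ≥ π √B` and `sin x < x` make `1 - s² B` positive.
-/

open Real

lemma sin_sq_mul_lt_one {x B : ℝ} (hB : 0 < B) (h : x ^ 2 * B ≤ 1) : sin x ^ 2 * B < 1 := by
  rcases eq_or_ne x 0 with rfl | hx
  · simp
  · exact (mul_lt_mul_of_pos_right (sin_sq_lt_sq hx) hB).trans_le h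

lemma div_sq_mul_le_one {a B M : ℝ} (ha : 0 ≤ a) (hB : 0 ≤ B) (hM : a * √B ≤ M) :
    (a / M) ^ 2 * B ≤ 1 := by
  have hM0 : 0 ≤ M := (by positivity : 0 ≤ a * √B).trans hM
  calc (a / M) ^ 2 * B = (a * √B / M) ^ 2 := by rw [div_pow, div_pow, mul_pow, sq_sqrt hB]; ring
    _ ≤ 1 := pow_le_one₀ (by positivity) (div_le_one_of_le₀ hM hM0)

lemma le_mul_sub_of_le_mul_one_sub_inv {a t B : ℝ} (hB : 0 < B) (h : a ≤ t * (1 - 1 / B)) :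
    t ≤ B * (t - a) := by
  have := mul_le_mul_of_nonneg_left h hB.le
  rw [mul_left_comm, mul_sub, mul_one_div_cancel hB.ne', mul_sub, mul_one, mul_one] at this
  linarith

lemma one_add_sin_sq_mul_div_eq (x B : ℝ) (h : 1 - sin x ^ 2 * B ≠ 0) :
    1 + sin x ^ 2 * (B - 1) / (1 - sin x ^ 2 * B) = cos x ^ 2 / (1 - sin x ^ 2 * B) := by
  rw [one_add_div h, cos_sq']
  ring_nf

lemma one_sub_sin_sq_mul_mul_le {x B T G H : ℝ} (hH : H = cos x * G)
    (hT : T ^ 2 ≤ B * (T ^ 2 - H ^ 2)) :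
    (1 - sin x ^ 2 * B) * (T ^ 2 - H ^ 2) ≤ cos x ^ 2 * (T ^ 2 - G ^ 2) := by
  subst hH
  linear_combination mul_le_mul_of_nonneg_left hT (sq_nonneg (sin x)) - T ^ 2 * sin_sq_add_cos_sq x

lemma div_le_mul_div_of_le_mul {x a b k : ℝ} (hx : 0 ≤ x) (hb : 0 < b) (hk : 0 ≤ k)
    (h : b ≤ k * a) : x / a ≤ k * (x / b) := by
  have ha : 0 < a := pos_of_mul_pos_right (hb.trans_le h) hk
  rw [mul_div_assoc', div_le_div_iff₀ ha hb]
  nlinarith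

theorem speb_gap_bound_general (T G H S B : ℝ) (M : ℕ)
    (hT : 0 < T)
    (hHG : H = Real.cos (Real.pi / M) * G)
    (hH2 : H ^ 2 ≤ T ^ 2 * (1 - 1 / B))
    (hS0 : 0 ≤ S) (hST : S < T)
    (hB : B = T ^ 2 / (T ^ 2 - S ^ 2))
    (hM : Real.pi * Real.sqrt B ≤ M) :
    4 * T / (T ^ 2 - G ^ 2)
      ≤ (1 + Real.sin (Real.pi / M) ^ 2 * (B - 1) / (1 - Real.sin (Real.pi / M) ^ 2 * B))
          * (4 * T / (T ^ 2 - H ^ 2)) := by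
  have hBpos : 0 < B :=
    hB ▸ div_pos (by positivity) (sub_pos.2 (pow_lt_pow_left₀ hST hS0 two_ne_zero))
  have hsB : 0 < 1 - sin (π / M) ^ 2 * B :=
    sub_pos.2 (sin_sq_mul_lt_one hBpos (div_sq_mul_le_one pi_pos.le hBpos.le hM))
  have hTB := le_mul_sub_of_le_mul_one_sub_inv hBpos hH2
  have hTH : 0 < T ^ 2 - H ^ 2 := pos_of_mul_pos_right ((pow_pos hT 2).trans_le hTB) hBpos.le
  rw [one_add_sin_sq_mul_div_eq _ _ hsB.ne']
  refine div_le_mul_div_of_le_mul (by positivity) hTH (by positivity) ?_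
  rw [div_mul_eq_mul_div, le_div_iff₀ hsB, mul_comm]
  exact one_sub_sin_sq_mul_mul_le hHG hTB

theorem speb_gap_bound (T G H S B : ℝ) (M : ℕ)
    (hT : 0 < T) (hG : 0 < G) (hH : 0 < H)
    (hHG : H = Real.cos (Real.pi / M) * G)
    (hH2 : H ^ 2 ≤ T ^ 2 * (1 - 1 / B))
    (hGT : G < T)
    (hS0 : 0 ≤ S) (hST : S < T)
    (hB : B = T ^ 2 / (T ^ 2 - S ^ 2))
    (hHS : H ≤ S) (hSG : S ≤ G)
    (hM : Real.pi * Real.sqrt B ≤ M) :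
    4 * T / (T ^ 2 - G ^ 2)
      ≤ (1 + Real.sin (Real.pi / M) ^ 2 * (B - 1) / (1 - Real.sin (Real.pi / M) ^ 2 * B))
          * (4 * T / (T ^ 2 - H ^ 2)) :=
  speb_gap_bound_general T G H S B M hT hHG hH2 hS0 hST hB hM
end
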